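/- arXiv:1902.07100 — 4 statements merged into one kernel-verified Lean document; each statement's English description precedes it below -/
import Mathlib

section
/- Let α > 0 and let P ∈ C²([0,∞)) satisfy P(0) = 0 and P'(r) ≥ α for all r ≥ 0 (so that P is a bijection from [0,∞) onto [0,∞) with inverse P^{-1}). Then the function f(r) := r · P^{-1}(r) is convex on [0,∞) if and only if P(r) · P''(r) ≤ 2 · (P'(r))² for all r ≥ 0. -/
/-!
With `Q = P⁻¹` we have `Q' = 1 / P' ∘ Q`, so `f(x) = x Q(x)` has `f' = Q + x / P'(Q x)` and,
writing `x = P(s)`, `f''(x) = (2 P'(s)² - P(s) P''(s)) / P'(s)³`. As `P' > 0`, convexity of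
`f`, i.e. `f'' ≥ 0` on `(0,∞)`, is the inequality `P P'' ≤ 2 (P')²` at every `s = Q x > 0`;
at `s = 0` it holds trivially because `P(0) = 0`.
-/

open Set Filter Topology

theorem convexOn_iff_forall_nonneg_of_hasDerivAt2 {D : Set ℝ} {f f' f'' : ℝ → ℝ}
    (hD : Convex ℝ D) (hf : ContinuousOn f D) (hf' : ∀ x ∈ interior D, HasDerivAt f (f' x) x)
    (hf'' : ∀ x ∈ interior D, HasDerivAt f' (f'' x) x) :
    ConvexOn ℝ D f ↔ ∀ x ∈ interior D, 0 ≤ f'' x := by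
  refine ⟨fun hconv x hx => ?_, convexOn_of_hasDerivWithinAt2_nonneg hD hf
    (fun x hx => (hf' x hx).hasDerivWithinAt) (fun x hx => (hf'' x hx).hasDerivWithinAt)⟩
  have hmono : MonotoneOn f' (interior D) :=
    ((hconv.subset interior_subset hD.interior).monotoneOn_deriv
      fun y hy => (hf' y hy).differentiableAt).congr
      (deriv_eqOn isOpen_interior fun y hy => (hf' y hy).hasDerivWithinAt)
  have hacc : AccPt x (𝓟 (interior D)) := by
    simpa using (PerfectSpace.univ_preperfect x (mem_univ x)).nhds_inter
      (isOpen_interior.mem_nhds hx)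
  exact (hf'' x hx).hasDerivWithinAt.nonneg_of_monotoneOn hacc hmono

section RightInverse

variable {D E : Set ℝ} {α : ℝ} {P P' Q : ℝ → ℝ}

theorem mul_sub_le_sub_of_le_hasDerivAt (hD : Convex ℝ D)
    (hP : ∀ r ∈ D, HasDerivAt P (P' r) r) (hPα : ∀ r ∈ D, α ≤ P' r) {a b : ℝ}
    (ha : a ∈ D) (hb : b ∈ D) (hab : a ≤ b) : α * (b - a) ≤ P b - P a :=
  hD.mul_sub_le_image_sub_of_le_deriv (fun x hx => (hP x hx).continuousAt.continuousWithinAt)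
    (fun x hx => (hP x (interior_subset hx)).differentiableAt.differentiableWithinAt)
    (fun x hx => (hP x (interior_subset hx)).deriv ▸ hPα x (interior_subset hx)) a ha b hb hab

theorem monotoneOn_of_rightInvOn (hα : 0 < α) (hD : Convex ℝ D)
    (hP : ∀ r ∈ D, HasDerivAt P (P' r) r) (hPα : ∀ r ∈ D, α ≤ P' r)
    (hQ : MapsTo Q E D) (hPQ : ∀ r ∈ E, P (Q r) = r) : MonotoneOn Q E := by
  intro a ha b hb hab
  by_contra! h
  have hP_le := mul_sub_le_sub_of_le_hasDerivAt hD hP hPα (hQ hb) (hQ ha) h.le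
  rw [hPQ a ha, hPQ b hb] at hP_le
  linarith [mul_pos hα (sub_pos.2 h)]

theorem mul_sub_le_sub_of_rightInvOn (hα : 0 < α) (hD : Convex ℝ D)
    (hP : ∀ r ∈ D, HasDerivAt P (P' r) r) (hPα : ∀ r ∈ D, α ≤ P' r)
    (hQ : MapsTo Q E D) (hPQ : ∀ r ∈ E, P (Q r) = r) {a b : ℝ} (ha : a ∈ E) (hb : b ∈ E)
    (hab : a ≤ b) : α * (Q b - Q a) ≤ b - a := by
  have hP_le := mul_sub_le_sub_of_le_hasDerivAt hD hP hPα (hQ ha) (hQ hb)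
    (monotoneOn_of_rightInvOn hα hD hP hPα hQ hPQ ha hb hab)
  rwa [hPQ a ha, hPQ b hb] at hP_le

theorem lipschitzOnWith_of_rightInvOn (hα : 0 < α) (hD : Convex ℝ D)
    (hP : ∀ r ∈ D, HasDerivAt P (P' r) r) (hPα : ∀ r ∈ D, α ≤ P' r)
    (hQ : MapsTo Q E D) (hPQ : ∀ r ∈ E, P (Q r) = r) :
    LipschitzOnWith (Real.toNNReal α⁻¹) Q E := by
  refine LipschitzOnWith.of_dist_le_mul fun a ha b hb => ?_
  rw [Real.coe_toNNReal _ (inv_nonneg.2 hα.le), Real.dist_eq, Real.dist_eq, inv_mul_eq_div,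
    le_div_iff₀ hα]
  wlog hab : a ≤ b generalizing a b
  · rw [abs_sub_comm, abs_sub_comm a]
    exact this b hb a ha (le_of_not_ge hab)
  rw [abs_of_nonpos (sub_nonpos.2 (monotoneOn_of_rightInvOn hα hD hP hPα hQ hPQ ha hb hab)),
    abs_of_nonpos (sub_nonpos.2 hab)]
  linarith [mul_sub_le_sub_of_rightInvOn hα hD hP hPα hQ hPQ ha hb hab]

theorem hasDerivAt_of_rightInvOn (hα : 0 < α) (hD : Convex ℝ D)
    (hP : ∀ r ∈ D, HasDerivAt P (P' r) r) (hPα : ∀ r ∈ D, α ≤ P' r)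
    (hQ : MapsTo Q E D) (hPQ : ∀ r ∈ E, P (Q r) = r) {x : ℝ} (hx : x ∈ interior E) :
    HasDerivAt Q (P' (Q x))⁻¹ x :=
  have hE : E ∈ 𝓝 x := mem_interior_iff_mem_nhds.1 hx
  have hQx : Q x ∈ D := hQ (interior_subset hx)
  HasDerivAt.of_local_left_inverse
    ((lipschitzOnWith_of_rightInvOn hα hD hP hPα hQ hPQ).continuousOn.continuousAt hE)
    (hP _ hQx) (hα.trans_le (hPα _ hQx)).ne' (eventually_of_mem hE hPQ)

end RightInverse

theorem hasDerivAt_add_mul_inv_deriv_comp {P' P'' Q : ℝ → ℝ} {x : ℝ}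
    (hQ : HasDerivAt Q (P' (Q x))⁻¹ x) (hP' : HasDerivAt P' (P'' (Q x)) (Q x))
    (hne : P' (Q x) ≠ 0) :
    HasDerivAt (fun y => Q y + y * (P' (Q y))⁻¹)
      ((2 * P' (Q x) ^ 2 - x * P'' (Q x)) / P' (Q x) ^ 3) x := by
  have hcomp : HasDerivAt (fun y => P' (Q y)) (P'' (Q x) * (P' (Q x))⁻¹) x := hP'.comp x hQ
  refine (hQ.add ((hasDerivAt_id' x).fun_mul (hcomp.fun_inv hne))).congr_deriv ?_
  field_simp
  ring

theorem stmt1_general (α : ℝ) (hα : 0 < α) (P P' P'' Q : ℝ → ℝ)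
    (hP0 : P 0 = 0)
    (hP' : ∀ r ∈ Set.Ici (0 : ℝ), HasDerivAt P (P' r) r)
    (hP'' : ∀ r ∈ Set.Ici (0 : ℝ), HasDerivAt P' (P'' r) r)
    (hPα : ∀ r ∈ Set.Ici (0 : ℝ), α ≤ P' r)
    -- `Q` is the inverse function `P⁻¹`, a bijection of `[0,∞)` onto itself
    (hQmem : ∀ r ∈ Set.Ici (0 : ℝ), Q r ∈ Set.Ici (0 : ℝ))
    (hPQ : ∀ r ∈ Set.Ici (0 : ℝ), P (Q r) = r)
    (hQP : ∀ r ∈ Set.Ici (0 : ℝ), Q (P r) = r) :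
    ConvexOn ℝ (Set.Ici 0) (fun r => r * Q r) ↔
      ∀ r ∈ Set.Ici (0 : ℝ), P r * P'' r ≤ 2 * (P' r) ^ 2 := by
  have hP'pos : ∀ r ∈ Ici (0 : ℝ), 0 < P' r := fun r hr => hα.trans_le (hPα r hr)
  have hQd : ∀ x ∈ interior (Ici (0 : ℝ)), HasDerivAt Q (P' (Q x))⁻¹ x :=
    fun x hx => hasDerivAt_of_rightInvOn hα (convex_Ici 0) hP' hPα hQmem hPQ hx
  rw [convexOn_iff_forall_nonneg_of_hasDerivAt2 (f := fun r => r * Q r) (convex_Ici 0)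
    (continuousOn_id.fun_mul
      (lipschitzOnWith_of_rightInvOn hα (convex_Ici 0) hP' hPα hQmem hPQ).continuousOn)
    (fun x hx => by simpa using (hasDerivAt_id' x).fun_mul (hQd x hx))
    (fun x hx => have hQx := hQmem x (interior_subset hx)
      hasDerivAt_add_mul_inv_deriv_comp (hQd x hx) (hP'' _ hQx) (hP'pos _ hQx).ne'),
    interior_Ici]
  have hsign : ∀ r ∈ Ici (0 : ℝ),
      0 ≤ (2 * P' r ^ 2 - P r * P'' r) / P' r ^ 3 ↔ P r * P'' r ≤ 2 * P' r ^ 2 := by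
    intro r hr
    rw [le_div_iff₀ (pow_pos (hP'pos r hr) 3), zero_mul, sub_nonneg]
  constructor
  · intro h r hr
    rcases (mem_Ici.1 hr).eq_or_lt with rfl | hr0
    · rw [hP0, zero_mul]
      positivity
    · have hPr : 0 < P r := by
        linarith [mul_pos hα hr0, mul_sub_le_sub_of_le_hasDerivAt (convex_Ici 0) hP' hPα
          self_mem_Ici hr hr0.le]
      have hnonneg := h (P r) hPr
      rwa [hQP r hr, hsign r hr] at hnonneg
  · intro h x hx
    have hx' : x ∈ Ici 0 := Ioi_subset_Ici_self hx
    have hnonneg := (hsign _ (hQmem x hx')).2 (h _ (hQmem x hx'))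
    rwa [hPQ x hx'] at hnonneg

/-- For `P ∈ C²([0,∞))` with `P(0) = 0` and `P' ≥ α > 0` (with inverse `Q`),
the function `f(r) = r · P⁻¹(r)` is convex on `[0,∞)` iff `P·P'' ≤ 2(P')²` on `[0,∞)`. -/
theorem stmt1 (α : ℝ) (hα : 0 < α) (P P' P'' Q : ℝ → ℝ)
    (hP0 : P 0 = 0)
    (hP' : ∀ r ∈ Set.Ici (0 : ℝ), HasDerivAt P (P' r) r)
    (hP'' : ∀ r ∈ Set.Ici (0 : ℝ), HasDerivAt P' (P'' r) r)
    (hP''cont : ContinuousOn P'' (Set.Ici 0))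
    (hPα : ∀ r ∈ Set.Ici (0 : ℝ), α ≤ P' r)
    -- `Q` is the inverse function `P⁻¹`, a bijection of `[0,∞)` onto itself
    (hQmem : ∀ r ∈ Set.Ici (0 : ℝ), Q r ∈ Set.Ici (0 : ℝ))
    (hPQ : ∀ r ∈ Set.Ici (0 : ℝ), P (Q r) = r)
    (hQP : ∀ r ∈ Set.Ici (0 : ℝ), Q (P r) = r) :
    ConvexOn ℝ (Set.Ici 0) (fun r => r * Q r) ↔
      ∀ r ∈ Set.Ici (0 : ℝ), P r * P'' r ≤ 2 * (P' r) ^ 2 :=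
  stmt1_general α hα P P' P'' Q hP0 hP' hP'' hPα hQmem hPQ hQP
end

section
/- Let P(r) = p(r) + (γ/2) r² be an admissible generalized pressure function with constants α > 0, β > 2 and c > 0 such that P'(r)/r^{β−1} → c as r → ∞, where p ∈ C²([0,∞)) and γ > 0. Let W ∈ C²((0,∞)) be any energy function satisfying p'(r) = r W''(r) for r > 0. Then lim_{r→∞} W(r)/P(r) = 1/(β−1). -/
/-!
Since `p'(r) = P'(r) - γ r`, the relation `p' = r W''` gives `W''(r) = P'(r)/r - γ ~ c r^(β-2)`.
L'Hôpital's rule at `+∞` for quotients of the form `∞/∞`, with powers of `r` as denominators,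
integrates such asymptotics: twice for `W`, giving `W(r) ~ c r^β / ((β-1)β)`, and once for `P`,
giving `P(r) ~ c r^β / β`.
-/

open Filter Set Asymptotics Topology

theorem isLittleO_atTop_of_deriv {f g f' g' : ℝ → ℝ}
    (hf : ∀ᶠ x in atTop, HasDerivAt f (f' x) x) (hg : ∀ᶠ x in atTop, HasDerivAt g (g' x) x)
    (hg' : ∀ᶠ x in atTop, 0 ≤ g' x) (hg_top : Tendsto g atTop atTop) (h : f' =o[atTop] g') :
    f =o[atTop] g := by
  rw [isLittleO_iff]
  intro ε hε
  obtain ⟨R, hR⟩ := (hf.and (hg.and (hg'.and (h.def (half_pos hε))))).exists_forall_of_atTop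
  have increment_le : ∀ x, R ≤ x → |f x - f R| ≤ ε / 2 * (g x - g R) := by
    intro x hx
    refine image_norm_le_of_norm_deriv_right_le_deriv_boundary' (a := R) (b := x)
      (f := fun y => f y - f R) (f' := f')
      (B := fun y => ε / 2 * (g y - g R)) (B' := fun y => ε / 2 * g' y)
      ?_ (fun y hy => ?_) (by simp) ?_ (fun y hy => ?_) (fun y hy => ?_) ⟨hx, le_rfl⟩
    · exact fun y hy => ((hR y hy.1).1.sub_const _).continuousAt.continuousWithinAt
    · exact ((hR y hy.1).1.sub_const _).hasDerivWithinAt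
    · exact fun y hy =>
        (((hR y hy.1).2.1.sub_const _).const_mul _).continuousAt.continuousWithinAt
    · exact (((hR y hy.1).2.1.sub_const _).const_mul _).hasDerivWithinAt
    · simpa only [Real.norm_of_nonneg (hR y hy.1).2.2.1] using (hR y hy.1).2.2.2
  filter_upwards [eventually_ge_atTop R, hg_top.eventually_ge_atTop 0,
    hg_top.eventually_ge_atTop (2 / ε * |f R| - g R)] with x hxR hg0 hglarge
  have hlarge : |f R| - ε / 2 * g R ≤ ε / 2 * g x := by
    calc |f R| - ε / 2 * g R = ε / 2 * (2 / ε * |f R| - g R) := by field_simp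
      _ ≤ ε / 2 * g x := by gcongr
  rw [Real.norm_eq_abs, Real.norm_of_nonneg hg0]
  linarith [increment_le x hxR, abs_sub_abs_le_abs_sub (f x) (f R)]

theorem tendsto_div_atTop_of_tendsto_deriv_div {f g f' g' : ℝ → ℝ} {L : ℝ}
    (hf : ∀ᶠ x in atTop, HasDerivAt f (f' x) x) (hg : ∀ᶠ x in atTop, HasDerivAt g (g' x) x)
    (hg' : ∀ᶠ x in atTop, 0 < g' x) (hg_top : Tendsto g atTop atTop)
    (h : Tendsto (fun x => f' x / g' x) atTop (𝓝 L)) :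
    Tendsto (fun x => f x / g x) atTop (𝓝 L) := by
  have hderiv : (fun x => f' x - L * g' x) =o[atTop] g' := by
    refine isLittleO_of_tendsto' (hg'.mono fun x hx h0 => absurd h0 hx.ne') ?_
    rw [← sub_self L]
    refine (h.sub_const L).congr' (hg'.mono fun x hx => ?_)
    field_simp
  have hlo : (fun x => f x - L * g x) =o[atTop] g :=
    isLittleO_atTop_of_deriv ((hf.and hg).mono fun x hx => hx.1.sub (hx.2.const_mul L)) hg
      (hg'.mono fun _ => le_of_lt) hg_top hderiv
  rw [← zero_add L]
  refine (hlo.tendsto_div_nhds_zero.add_const L).congr' ?_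
  filter_upwards [hg_top.eventually_gt_atTop 0] with x hx
  field_simp
  ring

theorem tendsto_div_rpow_of_tendsto_deriv_div_rpow {f f' : ℝ → ℝ} {k L : ℝ} (hk : -1 < k)
    (hf : ∀ᶠ x in atTop, HasDerivAt f (f' x) x)
    (h : Tendsto (fun x => f' x / x ^ k) atTop (𝓝 L)) :
    Tendsto (fun x => f x / x ^ (k + 1)) atTop (𝓝 (L / (k + 1))) := by
  have hk1 : 0 < k + 1 := by linarith
  refine tendsto_div_atTop_of_tendsto_deriv_div (g' := fun x => (k + 1) * x ^ k) hf ?_ ?_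
    (tendsto_rpow_atTop hk1) ?_
  · filter_upwards [eventually_gt_atTop 0] with x hx
    simpa using Real.hasDerivAt_rpow_const (p := k + 1) (Or.inl hx.ne')
  · filter_upwards [eventually_gt_atTop 0] with x hx
    positivity
  · refine (h.div_const (k + 1)).congr fun x => ?_
    rw [div_div, mul_comm]

theorem tendsto_div_self_sub_const_div_rpow {F : ℝ → ℝ} {k c γ : ℝ} (hk : 0 < k)
    (h : Tendsto (fun x => F x / x ^ (k + 1)) atTop (𝓝 c)) :
    Tendsto (fun x => (F x / x - γ) / x ^ k) atTop (𝓝 c) := by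
  have hγ : Tendsto (fun x : ℝ => γ / x ^ k) atTop (𝓝 0) :=
    tendsto_const_nhds.div_atTop (tendsto_rpow_atTop hk)
  rw [← sub_zero c]
  refine (h.sub hγ).congr' ?_
  filter_upwards [eventually_gt_atTop 0] with x hx
  rw [Real.rpow_add hx, Real.rpow_one]
  field_simp

theorem eq_deriv_div_sub_of_add_sq {p P : ℝ → ℝ} {γ r dp dP w : ℝ}
    (hPdef : ∀ x, P x = p x + γ / 2 * x ^ 2) (hp : HasDerivAt p dp r) (hP : HasDerivAt P dP r)
    (hr : r ≠ 0) (hw : dp = r * w) : w = dP / r - γ := by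
  have hP' : HasDerivAt P (dp + γ * r) r := by
    rw [funext hPdef]
    exact (hp.add ((hasDerivAt_pow 2 r).const_mul (γ / 2))).congr_deriv (by ring)
  rw [hP.unique hP', hw]
  field_simp
  ring

theorem stmt4_general (β c γ : ℝ) (hβ : 2 < β) (hc : 0 < c)
    (p p' P P' W W' W'' : ℝ → ℝ)
    -- the generalized pressure is `P(r) = p(r) + (γ/2) r²`, with `p ∈ C²([0,∞))`
    (hPdef : ∀ r : ℝ, P r = p r + γ / 2 * r ^ 2)
    (hp' : ∀ r ∈ Set.Ici (0 : ℝ), HasDerivAt p (p' r) r)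
    -- requirements (1)-(3) of admissibility
    (hP' : ∀ r ∈ Set.Ici (0 : ℝ), HasDerivAt P (P' r) r)
    -- requirement (5) with `β > 2`, `c > 0`
    (hlim : Tendsto (fun r : ℝ => P' r / r ^ (β - 1)) atTop (nhds c))
    -- the energy function `W ∈ C²((0,∞))` with `p'(r) = r W''(r)` for `r > 0`
    (hW' : ∀ r ∈ Set.Ioi (0 : ℝ), HasDerivAt W (W' r) r)
    (hW'' : ∀ r ∈ Set.Ioi (0 : ℝ), HasDerivAt W' (W'' r) r)
    (hpW : ∀ r ∈ Set.Ioi (0 : ℝ), p' r = r * W'' r) :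
    Tendsto (fun r : ℝ => W r / P r) atTop (nhds (1 / (β - 1))) := by
  have hW''_lim : Tendsto (fun r => W'' r / r ^ (β - 2)) atTop (𝓝 c) := by
    refine (tendsto_div_self_sub_const_div_rpow (F := P') (k := β - 2) (γ := γ) (by linarith)
      (by simpa [show β - 2 + 1 = β - 1 by ring] using hlim)).congr' ?_
    filter_upwards [eventually_gt_atTop 0] with r hr
    rw [eq_deriv_div_sub_of_add_sq hPdef (hp' r hr.le) (hP' r hr.le) hr.ne' (hpW r hr)]
  have hW'_lim : Tendsto (fun r => W' r / r ^ (β - 1)) atTop (𝓝 (c / (β - 1))) := by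
    simpa [show β - 2 + 1 = β - 1 by ring] using tendsto_div_rpow_of_tendsto_deriv_div_rpow
      (by linarith) ((eventually_gt_atTop 0).mono hW'') hW''_lim
  have hW_lim : Tendsto (fun r => W r / r ^ β) atTop (𝓝 (c / (β - 1) / β)) := by
    simpa using tendsto_div_rpow_of_tendsto_deriv_div_rpow
      (by linarith) ((eventually_gt_atTop 0).mono hW') hW'_lim
  have hP_lim : Tendsto (fun r => P r / r ^ β) atTop (𝓝 (c / β)) := by
    simpa using tendsto_div_rpow_of_tendsto_deriv_div_rpow
      (by linarith) ((eventually_ge_atTop 0).mono hP') hlim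
  have hβ0 : β ≠ 0 := by linarith
  have hβ1 : β - 1 ≠ 0 := by linarith
  convert (hW_lim.div hP_lim (by positivity)).congr' ?_ using 2
  · field_simp
  · filter_upwards [eventually_gt_atTop 0] with r hr
    exact div_div_div_cancel_right₀ (Real.rpow_pos_of_pos hr β).ne' _ _

/-- For an admissible generalized pressure function
`P(r) = p(r) + (γ/2) r²` with constants `α > 0`, `β > 2`, `c > 0` such that
`P'(r)/r^{β-1} → c`, and any energy function `W ∈ C²((0,∞))` with `p'(r) = r W''(r)`,
one has `W(r)/P(r) → 1/(β-1)` as `r → ∞`. -/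
theorem stmt4 (α β c γ : ℝ) (hα : 0 < α) (hβ : 2 < β) (hc : 0 < c) (hγ : 0 < γ)
    (p p' p'' P P' P'' Q W W' W'' : ℝ → ℝ)
    -- the generalized pressure is `P(r) = p(r) + (γ/2) r²`, with `p ∈ C²([0,∞))`
    (hPdef : ∀ r : ℝ, P r = p r + γ / 2 * r ^ 2)
    (hp' : ∀ r ∈ Set.Ici (0 : ℝ), HasDerivAt p (p' r) r)
    (hp'' : ∀ r ∈ Set.Ici (0 : ℝ), HasDerivAt p' (p'' r) r)
    (hp''cont : ContinuousOn p'' (Set.Ici 0))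
    -- requirements (1)-(3) of admissibility
    (hP0 : P 0 = 0)
    (hP' : ∀ r ∈ Set.Ici (0 : ℝ), HasDerivAt P (P' r) r)
    (hP'' : ∀ r ∈ Set.Ici (0 : ℝ), HasDerivAt P' (P'' r) r)
    (hP''cont : ContinuousOn P'' (Set.Ici 0))
    (hPα : ∀ r ∈ Set.Ici (0 : ℝ), α ≤ P' r ∧ α ≤ P'' r)
    -- requirement (4): `r ↦ r · P⁻¹(r)` is convex, `Q` being the inverse of `P`
    (hQmem : ∀ r ∈ Set.Ici (0 : ℝ), Q r ∈ Set.Ici (0 : ℝ))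
    (hPQ : ∀ r ∈ Set.Ici (0 : ℝ), P (Q r) = r)
    (hconv : ConvexOn ℝ (Set.Ici 0) (fun r => r * Q r))
    -- requirement (5) with `β > 2`, `c > 0`
    (hlim : Tendsto (fun r : ℝ => P' r / r ^ (β - 1)) atTop (nhds c))
    -- the energy function `W ∈ C²((0,∞))` with `p'(r) = r W''(r)` for `r > 0`
    (hW' : ∀ r ∈ Set.Ioi (0 : ℝ), HasDerivAt W (W' r) r)
    (hW'' : ∀ r ∈ Set.Ioi (0 : ℝ), HasDerivAt W' (W'' r) r)
    (hW''cont : ContinuousOn W'' (Set.Ioi 0))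
    (hpW : ∀ r ∈ Set.Ioi (0 : ℝ), p' r = r * W'' r) :
    Tendsto (fun r : ℝ => W r / P r) atTop (nhds (1 / (β - 1))) :=
  stmt4_general β c γ hβ hc p p' P P' W W' W'' hPdef hp' hP' hlim hW' hW'' hpW
end

section
/- Let D ⊂ ℝ^N be a bounded domain. Let f : ℝ → ℝ be a differentiable convex function with f ≥ 0, f(x) = f(−x) for all x, and f'(x)/x^{b−1} → c ∈ [0,∞) as x → ∞, for some constant b ≥ 1. Fix a constant a with 2 ≤ a < ∞ and 2(b−1) ≤ a. Let φ_n ∈ L^a(D) be a sequence converging weakly in L^a(D) to φ ∈ L^a(D) (i.e. ∫_D φ_n g → ∫_D φ g for every g ∈ L^{a/(a−1)}(D)), and suppose f(φ_n) converges weakly in L¹(D) to ψ ∈ L¹(D) (i.e. ∫_D f(φ_n) g → ∫_D ψ g for every g ∈ L^∞(D)). Then ψ ≥ f(φ) almost everywhere in D. -/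
/-!
Tangent lines of the convex function `f` give the pointwise bound
`f (φ n) ≥ f φ + f' φ * (φ n - φ)`. The growth condition on `f'` yields
`|f' x| ≤ C (1 + |x| ^ (a - 1))`, so `f' ∘ φ` lies in the dual space `L^{a/(a-1)}` and
`f ∘ φ` in `L¹`. Integrating the bound over a measurable `s`, weak convergence of `φ n`
(tested against `1_s f' φ`) removes the linear term and weak convergence of `f (φ n)`
(tested against `1_s`) leaves `∫_s f φ ≤ ∫_s ψ` for every `s`, hence `f φ ≤ ψ` a.e.
-/

open Filter Set MeasureTheory Asymptotics

theorem ConvexOn.add_deriv_mul_sub_le {S : Set ℝ} {f : ℝ → ℝ} {x y : ℝ}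
    (hf : ConvexOn ℝ S f) (hx : x ∈ S) (hy : y ∈ S) (hfd : DifferentiableAt ℝ f x) :
    f x + deriv f x * (y - x) ≤ f y := by
  rcases lt_trichotomy x y with hxy | rfl | hxy
  · have h := hf.deriv_le_slope hx hy hxy hfd
    rw [slope_def_field, le_div_iff₀ (sub_pos.2 hxy)] at h
    linarith
  · simp
  · have h := hf.slope_le_deriv hy hx hxy hfd
    rw [slope_def_field, div_le_iff₀ (sub_pos.2 hxy)] at h
    linarith

theorem Function.Even.odd_deriv {f : ℝ → ℝ} (hf : f.Even) : (deriv f).Odd := fun x => by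
  have h := deriv_comp_neg f x
  rw [show (fun y => f (-y)) = f from funext hf] at h
  rw [h, neg_neg]

theorem ConvexOn.abs_deriv_le_of_isBigO {f : ℝ → ℝ} {q : ℝ} (hf : ConvexOn ℝ univ f)
    (hfd : Differentiable ℝ f) (heven : f.Even)
    (hO : deriv f =O[atTop] fun x => x ^ q) :
    ∃ C, ∀ x, |deriv f x| ≤ C * (1 + |x| ^ q) := by
  have hmono : Monotone (deriv f) := monotoneOn_univ.1 (hf.monotoneOn_deriv fun x _ => hfd x)
  have hodd := heven.odd_deriv
  obtain ⟨K, hK⟩ := hO.bound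
  obtain ⟨M, hM⟩ := eventually_atTop.1 hK
  have hnonneg : ∀ x, 0 ≤ x → 0 ≤ deriv f x := fun x hx => hodd.map_zero ▸ hmono hx
  refine ⟨|K| + |deriv f M|, fun x => ?_⟩
  wlog hx : 0 ≤ x generalizing x
  · simpa [hodd.eq] using this (-x) (by linarith)
  rw [abs_of_nonneg hx, abs_of_nonneg (hnonneg x hx)]
  have hxq : 0 ≤ x ^ q := Real.rpow_nonneg hx q
  rcases le_total x M with hxM | hMx
  · have := hmono hxM
    nlinarith [mul_nonneg (add_nonneg (abs_nonneg K) (abs_nonneg (deriv f M))) hxq,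
      le_abs_self (deriv f M), abs_nonneg K]
  · have := hM x hMx
    rw [Real.norm_of_nonneg (hnonneg x hx), Real.norm_of_nonneg hxq] at this
    nlinarith [mul_nonneg (sub_nonneg.2 (le_abs_self K)) hxq,
      mul_nonneg (abs_nonneg (deriv f M)) (add_nonneg zero_le_one hxq), abs_nonneg K]

theorem isBigO_rpow_rpow_atTop_of_le {p q : ℝ} (hpq : p ≤ q) :
    (fun x : ℝ => x ^ p) =O[atTop] fun x => x ^ q := by
  refine IsBigO.of_bound 1 ?_
  filter_upwards [eventually_ge_atTop 1] with x hx
  rw [one_mul, Real.norm_of_nonneg (by positivity), Real.norm_of_nonneg (by positivity)]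
  exact Real.rpow_le_rpow_of_exponent_le hx hpq

theorem Real.rpow_le_one_add_rpow {t p q : ℝ} (ht : 0 ≤ t) (hp : 0 ≤ p) (hpq : p ≤ q) :
    t ^ p ≤ 1 + t ^ q := by
  rcases le_total t 1 with ht1 | ht1
  · linarith [Real.rpow_le_one ht ht1 hp, Real.rpow_nonneg ht q]
  · linarith [Real.rpow_le_rpow_of_exponent_le ht1 hpq]

theorem ConvexOn.abs_le_of_abs_deriv_le {f : ℝ → ℝ} {C q : ℝ} (hf : ConvexOn ℝ univ f)
    (hfd : Differentiable ℝ f) (hq : 0 ≤ q) (hC : ∀ x, |deriv f x| ≤ C * (1 + |x| ^ q))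
    (x : ℝ) :
    |f x| ≤ (|f 0| + 2 * C) * (1 + |x| ^ (q + 1)) := by
  have hC0 : 0 ≤ C := nonneg_of_mul_nonneg_left ((abs_nonneg _).trans (hC 0)) (by positivity)
  -- the tangent lines at `x` and at `0` bound `f x - f 0` from above and from below
  have hupper := hf.add_deriv_mul_sub_le (mem_univ x) (mem_univ 0) (hfd x)
  have hlower := hf.add_deriv_mul_sub_le (mem_univ 0) (mem_univ x) (hfd 0)
  have hpow : |x| ^ (q + 1) = |x| ^ q * |x| := Real.rpow_add_one' (abs_nonneg x) (by linarith)
  have habs_le : |x| ≤ 1 + |x| ^ (q + 1) := by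
    simpa using Real.rpow_le_one_add_rpow (abs_nonneg x) zero_le_one (by linarith)
  have h0 : |deriv f 0| ≤ C * (1 + |x| ^ q) := by
    have := Real.rpow_le_rpow le_rfl (abs_nonneg x) hq
    rw [← abs_zero] at this
    exact (hC 0).trans (by gcongr)
  have hdiff : |f x - f 0| ≤ C * (1 + |x| ^ q) * |x| := by
    rw [abs_le]
    constructor
    · nlinarith [neg_abs_le (deriv f 0 * x), abs_mul (deriv f 0) x,
        mul_le_mul_of_nonneg_right h0 (abs_nonneg x)]
    · nlinarith [le_abs_self (deriv f x * x), abs_mul (deriv f x) x,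
        mul_le_mul_of_nonneg_right (hC x) (abs_nonneg x)]
  calc |f x| ≤ |f 0| + |f x - f 0| := by
        simpa using abs_add_le (f 0) (f x - f 0)
    _ ≤ |f 0| + C * (|x| + |x| ^ (q + 1)) := by rw [hpow]; linarith
    _ ≤ (|f 0| + 2 * C) * (1 + |x| ^ (q + 1)) := by
        nlinarith [abs_nonneg (f 0), Real.rpow_nonneg (abs_nonneg x) (q + 1),
          mul_le_mul_of_nonneg_left habs_le hC0]

namespace MeasureTheory

variable {α : Type*} [MeasurableSpace α] {μ : Measure α}

theorem MemLp.comp_of_abs_le_mul_one_add_rpow [IsFiniteMeasure μ] {u : α → ℝ} {F : ℝ → ℝ}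
    {p r C : ℝ} (hu : MemLp u (ENNReal.ofReal p) μ) (hr : 0 < r) (hF : Measurable F)
    (hFle : ∀ x, |F x| ≤ C * (1 + |x| ^ r)) :
    MemLp (fun x => F (u x)) (ENNReal.ofReal (p / r)) μ := by
  have hpow := hu.norm_rpow_div (ENNReal.ofReal r)
  rw [ENNReal.toReal_ofReal hr.le, ← ENNReal.ofReal_div_of_pos hr] at hpow
  have hbound : MemLp (fun x => C * (1 + ‖u x‖ ^ r)) (ENNReal.ofReal (p / r)) μ :=
    ((memLp_const (1 : ℝ)).add hpow).const_mul C
  refine hbound.of_le (hF.comp_aemeasurable hu.1.aemeasurable).aestronglyMeasurable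
    (ae_of_all _ fun x => ?_)
  simp only [Real.norm_eq_abs]
  exact (hFle _).trans (le_abs_self _)

theorem integral_mul_indicator {F G : α → ℝ} {s : Set α} (hs : MeasurableSet s) :
    ∫ x, F x * s.indicator G x ∂μ = ∫ x in s, F x * G x ∂μ := by
  simp_rw [← Set.indicator_mul_right]
  exact integral_indicator hs

theorem integral_comp_le_of_tendsto {p q : ENNReal} [p.HolderConjugate q] {f : ℝ → ℝ}
    (hf : ConvexOn ℝ univ f) (hfd : Differentiable ℝ f) {φn : ℕ → α → ℝ} {φ : α → ℝ} {ℓ : ℝ}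
    (hφn : ∀ n, MemLp (φn n) p μ) (hφ : MemLp φ p μ)
    (hf'φ : MemLp (fun x => deriv f (φ x)) q μ)
    (hfφn : ∀ n, Integrable (fun x => f (φn n x)) μ) (hfφ : Integrable (fun x => f (φ x)) μ)
    (hweak : Tendsto (fun n => ∫ x, φn n x * deriv f (φ x) ∂μ) atTop
      (nhds (∫ x, φ x * deriv f (φ x) ∂μ)))
    (hlim : Tendsto (fun n => ∫ x, f (φn n x) ∂μ) atTop (nhds ℓ)) :
    ∫ x, f (φ x) ∂μ ≤ ℓ := by
  have hpair : ∀ {u : α → ℝ}, MemLp u p μ → Integrable (fun x => u x * deriv f (φ x)) μ :=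
    fun hu => hu.integrable_mul hf'φ
  have hlower : Tendsto (fun n => ∫ x, f (φ x) ∂μ +
      (∫ x, φn n x * deriv f (φ x) ∂μ - ∫ x, φ x * deriv f (φ x) ∂μ)) atTop
      (nhds (∫ x, f (φ x) ∂μ)) := by
    simpa using tendsto_const_nhds.add (hweak.sub_const (∫ x, φ x * deriv f (φ x) ∂μ))
  refine le_of_tendsto_of_tendsto' hlower hlim fun n => ?_
  have hdiff : Integrable (fun x => φn n x * deriv f (φ x) - φ x * deriv f (φ x)) μ :=
    (hpair (hφn n)).sub (hpair hφ)
  calc _ = ∫ x, f (φ x) + (φn n x * deriv f (φ x) - φ x * deriv f (φ x)) ∂μ := by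
        rw [integral_add hfφ hdiff, integral_sub (hpair (hφn n)) (hpair hφ)]
    _ ≤ ∫ x, f (φn n x) ∂μ := integral_mono (hfφ.add hdiff) (hfφn n) fun x => by
        have := hf.add_deriv_mul_sub_le (mem_univ (φ x)) (mem_univ (φn n x)) (hfd (φ x))
        dsimp only
        linarith

end MeasureTheory

theorem stmt5_general (N : ℕ) (D : Set (EuclideanSpace ℝ (Fin N)))
    (hDbd : Bornology.IsBounded D)
    (b c a : ℝ) (ha2 : 2 ≤ a) (hab : 2 * (b - 1) ≤ a)
    (f : ℝ → ℝ) (hfdiff : Differentiable ℝ f) (hfconv : ConvexOn ℝ Set.univ f)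
    (hfeven : ∀ x, f (-x) = f x)
    (hflim : Tendsto (fun x : ℝ => deriv f x / x ^ (b - 1)) atTop (nhds c))
    (φn : ℕ → EuclideanSpace ℝ (Fin N) → ℝ) (φ ψ : EuclideanSpace ℝ (Fin N) → ℝ)
    (hφn : ∀ n, MemLp (φn n) (ENNReal.ofReal a) (volume.restrict D))
    (hφ : MemLp φ (ENNReal.ofReal a) (volume.restrict D))
    (hfφn : ∀ n, IntegrableOn (fun x => f (φn n x)) D)
    (hψ : IntegrableOn ψ D)
    -- weak convergence `φ_n ⇀ φ` in `L^a(D)`: testing against all `g ∈ L^{a/(a-1)}(D)`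
    (hweak : ∀ g : EuclideanSpace ℝ (Fin N) → ℝ,
      MemLp g (ENNReal.ofReal (a / (a - 1))) (volume.restrict D) →
      Tendsto (fun n => ∫ x in D, φn n x * g x) atTop (nhds (∫ x in D, φ x * g x)))
    -- weak convergence `f(φ_n) ⇀ ψ` in `L¹(D)`: testing against all `g ∈ L^∞(D)`
    (hweak1 : ∀ g : EuclideanSpace ℝ (Fin N) → ℝ, Measurable g → (∃ C, ∀ x ∈ D, |g x| ≤ C) →
      Tendsto (fun n => ∫ x in D, f (φn n x) * g x) atTop (nhds (∫ x in D, ψ x * g x))) :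
    ∀ᵐ x ∂(volume.restrict D), f (φ x) ≤ ψ x := by
  have : IsFiniteMeasure (volume.restrict D) := isFiniteMeasure_restrict.2 hDbd.measure_lt_top.ne
  have : (ENNReal.ofReal a).HolderConjugate (ENNReal.ofReal (a / (a - 1))) :=
    (Real.HolderConjugate.conjExponent (by linarith)).ennrealOfReal
  have hderivO : deriv f =O[atTop] fun x => x ^ (a - 1) :=
    (isBigO_of_div_tendsto_nhds ((eventually_gt_atTop 0).mono fun x hx h =>
      absurd h (Real.rpow_pos_of_pos hx _).ne') c hflim).trans
      (isBigO_rpow_rpow_atTop_of_le (by linarith))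
  obtain ⟨C, hC⟩ := hfconv.abs_deriv_le_of_isBigO hfdiff hfeven hderivO
  have hf'φ : MemLp (fun x => deriv f (φ x)) (ENNReal.ofReal (a / (a - 1))) (volume.restrict D) :=
    hφ.comp_of_abs_le_mul_one_add_rpow (by linarith) (measurable_deriv f) hC
  have hfφ : Integrable (fun x => f (φ x)) (volume.restrict D) := by
    have := hφ.comp_of_abs_le_mul_one_add_rpow (by linarith) hfdiff.continuous.measurable
      (hfconv.abs_le_of_abs_deriv_le hfdiff (by linarith) hC)
    rwa [sub_add_cancel, div_self (by linarith), ENNReal.ofReal_one, memLp_one_iff_integrable]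
      at this
  refine ae_le_of_forall_setIntegral_le hfφ hψ fun s hs _ => ?_
  refine integral_comp_le_of_tendsto hfconv hfdiff (fun n => (hφn n).restrict s) (hφ.restrict s)
    (hf'φ.restrict s) (fun n => Integrable.restrict (hfφn n)) hfφ.restrict ?_ ?_
  · simpa only [integral_mul_indicator hs] using hweak _ (hf'φ.indicator hs)
  · have hbdd : ∀ x ∈ D, |s.indicator (fun _ => (1 : ℝ)) x| ≤ 1 := fun x _ => by
      by_cases hx : x ∈ s <;> simp [hx]
    simpa only [integral_mul_indicator hs, mul_one] using
      hweak1 _ (measurable_const.indicator hs) ⟨1, hbdd⟩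

/-- If `φ_n ⇀ φ` weakly in `L^a(D)` and `f(φ_n) ⇀ ψ` weakly in `L¹(D)`
for a differentiable, even, nonnegative convex `f` with `f'(x)/x^{b-1} → c ≥ 0`
(`b ≥ 1`, `2 ≤ a < ∞`, `2(b-1) ≤ a`), then `ψ ≥ f(φ)` a.e. in `D`. -/
theorem stmt5 (N : ℕ) (D : Set (EuclideanSpace ℝ (Fin N)))
    (hD : IsOpen D) (hDbd : Bornology.IsBounded D)
    (b c a : ℝ) (hb : 1 ≤ b) (hc : 0 ≤ c) (ha2 : 2 ≤ a) (hab : 2 * (b - 1) ≤ a)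
    (f : ℝ → ℝ) (hfdiff : Differentiable ℝ f) (hfconv : ConvexOn ℝ Set.univ f)
    (hfpos : ∀ x, 0 ≤ f x) (hfeven : ∀ x, f (-x) = f x)
    (hflim : Tendsto (fun x : ℝ => deriv f x / x ^ (b - 1)) atTop (nhds c))
    (φn : ℕ → EuclideanSpace ℝ (Fin N) → ℝ) (φ ψ : EuclideanSpace ℝ (Fin N) → ℝ)
    (hφn : ∀ n, MemLp (φn n) (ENNReal.ofReal a) (volume.restrict D))
    (hφ : MemLp φ (ENNReal.ofReal a) (volume.restrict D))
    (hfφn : ∀ n, IntegrableOn (fun x => f (φn n x)) D)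
    (hψ : IntegrableOn ψ D)
    -- weak convergence `φ_n ⇀ φ` in `L^a(D)`: testing against all `g ∈ L^{a/(a-1)}(D)`
    (hweak : ∀ g : EuclideanSpace ℝ (Fin N) → ℝ,
      MemLp g (ENNReal.ofReal (a / (a - 1))) (volume.restrict D) →
      Tendsto (fun n => ∫ x in D, φn n x * g x) atTop (nhds (∫ x in D, φ x * g x)))
    -- weak convergence `f(φ_n) ⇀ ψ` in `L¹(D)`: testing against all `g ∈ L^∞(D)`
    (hweak1 : ∀ g : EuclideanSpace ℝ (Fin N) → ℝ, Measurable g → (∃ C, ∀ x ∈ D, |g x| ≤ C) →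
      Tendsto (fun n => ∫ x in D, f (φn n x) * g x) atTop (nhds (∫ x in D, ψ x * g x))) :
    ∀ᵐ x ∂(volume.restrict D), f (φ x) ≤ ψ x :=
  stmt5_general N D hDbd b c a ha2 hab f hfdiff hfconv hfeven hflim φn φ ψ hφn hφ hfφn hψ hweak
    hweak1
end

section
/- Unit cell Y = (0,1)^N, solid grain Y_s a closed subset of Y with |Y_s| > 0, fluid part Y_f = Y \ Y_s, porosity θ = |Y_f| ∈ (0,1); for a bounded domain Ω ⊂ ℝ^N and ε > 0 set K_ε = {k ∈ ℤ^N : ε(Y + k) ⊂ Ω}, Ω_ε = Ω \ ⋃_{k∈K_ε} ε(Y_s + k), and Ω_K = interior of ⋃_{k∈K_ε} ε(closure(Y) + k). Then for every ψ ∈ C_c^∞(ℝ^N) with Lipschitz constant L: | ∫_{Ω_ε} ψ(y) dy − θ ∫_{Ω} ψ(y) dy | ≤ 2 |Ω| θ L √N ε + (1 − θ) |Ω \ Ω_K| · sup_{y ∈ Ω} |ψ(y)|. -/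
open Set MeasureTheory Filter Topology

noncomputable section

/-- The unit cell `Y = (0,1)^N ⊂ ℝ^N`. -/
def unitCell (N : ℕ) : Set (EuclideanSpace ℝ (Fin N)) :=
  {x | ∀ i, x i ∈ Set.Ioo (0 : ℝ) 1}

/-- The rescaled shifted cell `ε(A + k) = {ε(x + k) : x ∈ A}`. -/
def cellMap (N : ℕ) (ε : ℝ) (k : Fin N → ℤ) (A : Set (EuclideanSpace ℝ (Fin N))) :
    Set (EuclideanSpace ℝ (Fin N)) :=
  (fun x : EuclideanSpace ℝ (Fin N) => ε • (x + (WithLp.equiv 2 (Fin N → ℝ)).symm fun i => (k i : ℝ))) '' A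

/-- The index set `K_ε = {k ∈ ℤ^N : ε(Y + k) ⊂ Ω}`. -/
def Keps (N : ℕ) (Ω : Set (EuclideanSpace ℝ (Fin N))) (ε : ℝ) : Set (Fin N → ℤ) :=
  {k | cellMap N ε k (unitCell N) ⊆ Ω}

/-- The porous domain `Ω_ε = Ω ∖ ⋃_{k ∈ K_ε} ε(Y_s + k)`. -/
def Oeps (N : ℕ) (Ω Ys : Set (EuclideanSpace ℝ (Fin N))) (ε : ℝ) :
    Set (EuclideanSpace ℝ (Fin N)) :=
  Ω \ ⋃ k ∈ Keps N Ω ε, cellMap N ε k Ys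

/-- `Ω_K`, the interior of the union of the closed cells inside `Ω`. -/
def OK (N : ℕ) (Ω : Set (EuclideanSpace ℝ (Fin N))) (ε : ℝ) :
    Set (EuclideanSpace ℝ (Fin N)) :=
  interior (⋃ k ∈ Keps N Ω ε, cellMap N ε k (closure (unitCell N)))

namespace Stmt11Aux

open Pointwise

variable {N : ℕ}

def shift (k : Fin N → ℤ) : EuclideanSpace ℝ (Fin N) :=
  (WithLp.equiv 2 (Fin N → ℝ)).symm fun i => (k i : ℝ)

def cellHomeo (ε : ℝ) (hε : ε ≠ 0) (k : Fin N → ℤ) :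
    EuclideanSpace ℝ (Fin N) ≃ₜ EuclideanSpace ℝ (Fin N) :=
  (Homeomorph.addRight (shift k)).trans (Homeomorph.smulOfNeZero ε hε)

lemma cellMap_eq_homeo (ε : ℝ) (hε : ε ≠ 0) (k : Fin N → ℤ) (A : Set (EuclideanSpace ℝ (Fin N))) :
    cellMap N ε k A = (cellHomeo ε hε k) '' A := rfl

lemma cellMap_mono (ε : ℝ) (k : Fin N → ℤ) {A B : Set (EuclideanSpace ℝ (Fin N))} (h : A ⊆ B) :
    cellMap N ε k A ⊆ cellMap N ε k B := Set.image_mono h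

lemma isOpen_cellMap (ε : ℝ) (hε : ε ≠ 0) (k : Fin N → ℤ) {A : Set (EuclideanSpace ℝ (Fin N))}
    (hA : IsOpen A) : IsOpen (cellMap N ε k A) := by
  rw [cellMap_eq_homeo ε hε]
  exact (Homeomorph.isOpen_image _).mpr hA

lemma isClosed_cellMap (ε : ℝ) (hε : ε ≠ 0) (k : Fin N → ℤ) {A : Set (EuclideanSpace ℝ (Fin N))}
    (hA : IsClosed A) : IsClosed (cellMap N ε k A) := by
  rw [cellMap_eq_homeo ε hε]
  exact (Homeomorph.isClosed_image _).mpr hA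

lemma cellMap_diff (ε : ℝ) (hε : ε ≠ 0) (k : Fin N → ℤ)
    (A B : Set (EuclideanSpace ℝ (Fin N))) :
    cellMap N ε k (A \ B) = cellMap N ε k A \ cellMap N ε k B := by
  rw [cellMap_eq_homeo ε hε, cellMap_eq_homeo ε hε, cellMap_eq_homeo ε hε]
  exact Set.image_diff (cellHomeo ε hε k).injective _ _

lemma cellMap_apply (ε : ℝ) (k : Fin N → ℤ) (x : EuclideanSpace ℝ (Fin N)) (i : Fin N) :
    (ε • (x + shift k)) i = ε * (x i + (k i : ℝ)) := by
  rw [PiLp.smul_apply, PiLp.add_apply]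
  simp [shift, WithLp.equiv_symm_apply]

lemma volume_cellMap (ε : ℝ) (k : Fin N → ℤ) (A : Set (EuclideanSpace ℝ (Fin N))) :
    volume (cellMap N ε k A) = ENNReal.ofReal (|ε| ^ N) * volume A := by
  have h : cellMap N ε k A = ε • ((fun x => x + shift k) '' A) := by
    rw [← Set.image_smul, Set.image_image]; rfl
  rw [h, Measure.addHaar_smul, finrank_euclideanSpace_fin, Set.image_add_right,
    measure_preimage_add_right, abs_pow]

lemma isOpen_unitCell : IsOpen (unitCell N) := by
  have h : unitCell N = (⇑(WithLp.equiv 2 (Fin N → ℝ))) ⁻¹'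
      (Set.univ.pi fun _ => Set.Ioo (0:ℝ) 1) := by
    ext x; simp [unitCell, Set.mem_pi]
  rw [h]
  exact (isOpen_set_pi Set.finite_univ fun i _ => isOpen_Ioo).preimage
    (PiLp.continuous_ofLp 2 fun _ : Fin N => ℝ)

lemma volume_unitCell : volume (unitCell N) = 1 := by
  have h : unitCell N = ((MeasurableEquiv.toLp 2 (Fin N → ℝ)).symm) ⁻¹'
      (Set.univ.pi fun _ => Set.Ioo (0:ℝ) 1) := by
    ext x; simp [unitCell, MeasurableEquiv.coe_toLp_symm, Set.mem_pi]
  rw [h, (EuclideanSpace.volume_preserving_symm_measurableEquiv_toLp (Fin N)).measure_preimage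
    ((MeasurableSet.univ_pi fun _ => measurableSet_Ioo).nullMeasurableSet), volume_pi_pi]
  simp [Real.volume_Ioo]

lemma volume_closure_unitCell : volume (closure (unitCell N)) = 1 := by
  have h1 : closure (unitCell N) ⊆ ((MeasurableEquiv.toLp 2 (Fin N → ℝ)).symm) ⁻¹'
      (Set.univ.pi fun _ => Set.Icc (0:ℝ) 1) := by
    apply closure_minimal
    · intro x hx
      simp only [Set.mem_preimage, Set.mem_pi, Set.mem_univ, forall_true_left]
      intro i; exact Set.Ioo_subset_Icc_self (hx i)
    · exact (isClosed_set_pi fun i _ => isClosed_Icc).preimage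
        (PiLp.continuous_ofLp 2 fun _ : Fin N => ℝ)
  have h2 : volume (((MeasurableEquiv.toLp 2 (Fin N → ℝ)).symm) ⁻¹'
      (Set.univ.pi fun _ => Set.Icc (0:ℝ) 1)) = 1 := by
    rw [(EuclideanSpace.volume_preserving_symm_measurableEquiv_toLp (Fin N)).measure_preimage
      ((MeasurableSet.univ_pi fun _ => measurableSet_Icc).nullMeasurableSet), volume_pi_pi]
    simp [Real.volume_Icc]
  refine le_antisymm (h2 ▸ measure_mono h1) ?_
  rw [← volume_unitCell (N := N)]
  exact measure_mono subset_closure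

lemma closure_unitCell_coord {x : EuclideanSpace ℝ (Fin N)} (hx : x ∈ closure (unitCell N))
    (i : Fin N) : x i ∈ Set.Icc (0:ℝ) 1 := by
  have h1 : closure (unitCell N) ⊆ ((MeasurableEquiv.toLp 2 (Fin N → ℝ)).symm) ⁻¹'
      (Set.univ.pi fun _ => Set.Icc (0:ℝ) 1) := by
    apply closure_minimal
    · intro x hx
      simp only [Set.mem_preimage, Set.mem_pi, Set.mem_univ, forall_true_left]
      intro i; exact Set.Ioo_subset_Icc_self (hx i)
    · exact (isClosed_set_pi fun i _ => isClosed_Icc).preimage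
        (PiLp.continuous_ofLp 2 fun _ : Fin N => ℝ)
  exact h1 hx i trivial

lemma cells_disjoint (ε : ℝ) (hε : 0 < ε) {k k' : Fin N → ℤ} (h : k ≠ k') :
    Disjoint (cellMap N ε k (unitCell N)) (cellMap N ε k' (unitCell N)) := by
  rw [Set.disjoint_left]
  rintro z ⟨x, hx, rfl⟩ ⟨y, hy, hxy⟩
  apply h
  funext i
  have hxy' : ε • (y + shift k') = ε • (x + shift k) := hxy
  have hco : ε * (y i + (k' i : ℝ)) = ε * (x i + (k i : ℝ)) := by
    rw [← cellMap_apply, ← cellMap_apply, hxy']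
  have h2 : (y i : ℝ) + (k' i : ℝ) = x i + (k i : ℝ) := mul_left_cancel₀ hε.ne' hco
  have h3 : |((k i : ℝ)) - (k' i : ℝ)| < 1 := by
    have hxi := hx i; have hyi := hy i
    rw [abs_lt]
    constructor <;> nlinarith [hxi.1, hxi.2, hyi.1, hyi.2]
  have h4 : |k i - k' i| < 1 := by
    have : |((k i - k' i : ℤ) : ℝ)| < 1 := by push_cast; exact h3
    exact_mod_cast this
  have := abs_lt.mp h4
  omega

lemma coord_le_norm (x : EuclideanSpace ℝ (Fin N)) (i : Fin N) : |x i| ≤ ‖x‖ := by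
  rw [EuclideanSpace.norm_eq]
  rw [← Real.sqrt_sq_eq_abs]
  apply Real.sqrt_le_sqrt
  apply Finset.single_le_sum (f := fun j => ‖x j‖ ^ 2) (fun j _ => sq_nonneg _) (Finset.mem_univ i)
    |>.trans_eq' ?_
  rw [Real.norm_eq_abs, sq_abs]

lemma keps_finite (Ω : Set (EuclideanSpace ℝ (Fin N))) (hΩb : Bornology.IsBounded Ω)
    (ε : ℝ) (hε : 0 < ε) : (Keps N Ω ε).Finite := by
  obtain ⟨R, hR⟩ := hΩb.subset_closedBall 0
  set M : ℤ := ⌈R / ε + 1⌉ with hM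
  apply Set.Finite.subset (Set.Finite.pi (t := fun _ : Fin N => Set.Icc (-M) M)
    (fun _ => Set.finite_Icc _ _))
  intro k hk
  simp only [Set.mem_pi, Set.mem_univ, forall_true_left, Set.mem_Icc]
  intro i
  set half : EuclideanSpace ℝ (Fin N) := (WithLp.equiv 2 (Fin N → ℝ)).symm fun _ => (1:ℝ)/2
  have hhalf : half ∈ unitCell N := by
    intro j
    simp [half, WithLp.equiv_symm_apply]
    norm_num
  have hp : ε • (half + shift k) ∈ Ω := hk ⟨half, hhalf, rfl⟩
  have hnorm : ‖ε • (half + shift k)‖ ≤ R := by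
    have := hR hp
    simpa [Metric.mem_closedBall, dist_zero_right] using this
  have hcoord : |ε * ((1:ℝ)/2 + (k i : ℝ))| ≤ R := by
    have h1 := coord_le_norm (ε • (half + shift k)) i
    rw [cellMap_apply] at h1
    have : half i = (1:ℝ)/2 := by simp [half, WithLp.equiv_symm_apply]
    rw [this] at h1
    linarith
  have habs : |(k i : ℝ)| ≤ R / ε + 1 := by
    rw [abs_mul, abs_of_pos hε] at hcoord
    have h2 : |(1:ℝ)/2 + (k i : ℝ)| ≤ R / ε := by
      rw [← le_div_iff₀' hε] at hcoord; exact hcoord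
    have h3 : |(k i : ℝ)| ≤ |(1:ℝ)/2 + (k i : ℝ)| + 1/2 := by
      have h5 : |(k i:ℝ)| - |(1:ℝ)/2 + k i| ≤ |(1:ℝ)/2| := by
        calc |(k i:ℝ)| - |(1:ℝ)/2 + k i| ≤ |(k i:ℝ) - ((1:ℝ)/2 + k i)| := abs_sub_abs_le_abs_sub _ _
          _ = |(1:ℝ)/2| := by
              rw [show (k i:ℝ) - ((1:ℝ)/2 + k i) = -((1:ℝ)/2) by ring, abs_neg]
      rw [abs_of_pos (by norm_num : (0:ℝ) < 1/2)] at h5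
      linarith
    linarith
  have hMR : R / ε + 1 ≤ (M : ℝ) := Int.le_ceil _
  have : |(k i : ℝ)| ≤ (M : ℝ) := habs.trans hMR
  rw [abs_le] at this
  exact ⟨by exact_mod_cast this.1, by exact_mod_cast this.2⟩

lemma dist_le_in_cell (ε : ℝ) (hε : 0 ≤ ε) (k : Fin N → ℤ) {x y : EuclideanSpace ℝ (Fin N)}
    (hx : x ∈ cellMap N ε k (closure (unitCell N)))
    (hy : y ∈ cellMap N ε k (closure (unitCell N))) :
    dist x y ≤ Real.sqrt N * ε := by
  obtain ⟨a, ha, rfl⟩ := hx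
  obtain ⟨b, hb, rfl⟩ := hy
  rw [EuclideanSpace.dist_eq]
  have hterm : ∀ i : Fin N, dist ((ε • (a + shift k)) i) ((ε • (b + shift k)) i) ^ 2 ≤ ε ^ 2 := by
    intro i
    rw [cellMap_apply, cellMap_apply, Real.dist_eq]
    have h1 : |ε * (a i + (k i:ℝ)) - ε * (b i + (k i:ℝ))| = ε * |a i - b i| := by
      rw [← mul_sub, abs_mul, abs_of_nonneg hε]; ring_nf
    rw [h1]
    have h2 : |a i - b i| ≤ 1 := by
      have ha' := closure_unitCell_coord ha i
      have hb' := closure_unitCell_coord hb i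
      rw [abs_le]; constructor <;> [linarith [ha'.1, hb'.2]; linarith [ha'.2, hb'.1]]
    rw [mul_pow]
    have h3 : |a i - b i| ^ 2 ≤ 1 := by nlinarith [abs_nonneg (a i - b i)]
    nlinarith [sq_nonneg ε]
  calc Real.sqrt (∑ i, dist ((ε • (a + shift k)) i) ((ε • (b + shift k)) i) ^ 2)
      ≤ Real.sqrt (∑ _i : Fin N, ε ^ 2) := Real.sqrt_le_sqrt (Finset.sum_le_sum fun i _ => hterm i)
    _ = Real.sqrt N * ε := by
        rw [Finset.sum_const, Finset.card_univ, Fintype.card_fin, nsmul_eq_mul,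
          Real.sqrt_mul (Nat.cast_nonneg N), Real.sqrt_sq hε]

lemma cell_integral_est {ψ : EuclideanSpace ℝ (Fin N) → ℝ} (hint : Integrable ψ volume)
    {A C : Set (EuclideanSpace ℝ (Fin N))} (hAC : A ⊆ C)
    (hCfin : volume C ≠ ⊤) (hCpos : 0 < (volume C).toReal)
    {θ : ℝ} (hθ : (volume A).toReal = θ * (volume C).toReal)
    {d : ℝ} (hd : ∀ x ∈ C, ∀ y ∈ C, |ψ x - ψ y| ≤ d) :
    |(∫ x in A, ψ x) - θ * ∫ x in C, ψ x| ≤ θ * (volume C).toReal * d := by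
  set cC := (volume C).toReal with hcC
  set cA := (volume A).toReal with hcA
  set I := ∫ x in C, ψ x with hI
  have hAfin : volume A ≠ ⊤ := ((measure_mono hAC).trans_lt hCfin.lt_top).ne
  have intC : IntegrableOn ψ C := hint.integrableOn
  have intA : IntegrableOn ψ A := hint.integrableOn
  have step1 : ∀ x ∈ C, |cC * ψ x - I| ≤ d * cC := by
    intro x hx
    have heq : cC * ψ x - I = ∫ y in C, (ψ x - ψ y) := by
      rw [integral_sub (integrableOn_const (C := ψ x) hCfin) intC, setIntegral_const,
        smul_eq_mul, measureReal_def]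
    rw [heq]
    have := norm_setIntegral_le_of_norm_le_const (μ := volume) (s := C) (C := d)
      hCfin.lt_top (f := fun y => ψ x - ψ y)
      (fun y hy => by rw [Real.norm_eq_abs]; exact hd x hx y hy)
    rwa [Real.norm_eq_abs] at this
  have step2 : (∫ x in A, (cC * ψ x - I)) = cC * (∫ x in A, ψ x) - cA * I := by
    rw [integral_sub ((intA.const_mul cC)) (integrableOn_const (C := I) hAfin),
      integral_const_mul, setIntegral_const, smul_eq_mul, measureReal_def]
  have step3 : |cC * (∫ x in A, ψ x) - cA * I| ≤ d * cC * cA := by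
    rw [← step2]
    have := norm_setIntegral_le_of_norm_le_const (μ := volume) (s := A) (C := d * cC)
      hAfin.lt_top (f := fun x => cC * ψ x - I)
      (fun x hx => by rw [Real.norm_eq_abs]; exact step1 x (hAC hx))
    rwa [Real.norm_eq_abs] at this
  have key : cC * |(∫ x in A, ψ x) - θ * I| ≤ cC * (θ * cC * d) := by
    have h1 : cC * ((∫ x in A, ψ x) - θ * I) = cC * (∫ x in A, ψ x) - cA * I := by
      rw [hθ]; ring
    calc cC * |(∫ x in A, ψ x) - θ * I| = |cC * ((∫ x in A, ψ x) - θ * I)| := by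
          rw [abs_mul, abs_of_nonneg hCpos.le]
      _ = |cC * (∫ x in A, ψ x) - cA * I| := by rw [h1]
      _ ≤ d * cC * cA := step3
      _ = cC * (θ * cC * d) := by rw [hθ]; ring
  exact le_of_mul_le_mul_left key hCpos

end Stmt11Aux

open Stmt11Aux in
/-- for every `ψ ∈ C_c^∞(ℝ^N)` with Lipschitz constant `L`,
`|∫_{Ω_ε} ψ − θ ∫_Ω ψ| ≤ 2|Ω|θL√N ε + (1-θ)|Ω ∖ Ω_K| sup_{y ∈ Ω} |ψ(y)|`. -/
theorem stmt11 (N : ℕ) (Ys : Set (EuclideanSpace ℝ (Fin N)))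
    (hYsc : IsClosed Ys) (hYsub : Ys ⊆ unitCell N) (hYspos : 0 < volume Ys)
    (Ω : Set (EuclideanSpace ℝ (Fin N))) (hΩo : IsOpen Ω) (hΩconn : IsConnected Ω)
    (hΩb : Bornology.IsBounded Ω)
    (ε : ℝ) (hε : 0 < ε)
    (L : NNReal) (ψ : EuclideanSpace ℝ (Fin N) → ℝ)
    (hψsmooth : ContDiff ℝ (⊤ : ℕ∞) ψ) (hψsupp : HasCompactSupport ψ) (hψ : LipschitzWith L ψ) :
    |(∫ y in Oeps N Ω Ys ε, ψ y) -
        (volume (unitCell N \ Ys)).toReal * ∫ y in Ω, ψ y|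
      ≤ 2 * (volume Ω).toReal * (volume (unitCell N \ Ys)).toReal * L * Real.sqrt N * ε
        + (1 - (volume (unitCell N \ Ys)).toReal) * (volume (Ω \ OK N Ω ε)).toReal *
            ⨆ y ∈ Ω, |ψ y| := by
  classical
  have hε' : ε ≠ 0 := hε.ne'
  set θ := (volume (unitCell N \ Ys)).toReal with hθdef
  have hcont : Continuous ψ := hψsmooth.continuous
  have hint : Integrable ψ volume := hcont.integrable_of_hasCompactSupport hψsupp
  have hΩfin : volume Ω < ⊤ := hΩb.measure_lt_top
  have hKfin := keps_finite Ω hΩb ε hε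
  set K : Finset (Fin N → ℤ) := hKfin.toFinset with hKdef
  have hKmem : ∀ k, k ∈ K ↔ k ∈ Keps N Ω ε := fun k => hKfin.mem_toFinset
  set C : (Fin N → ℤ) → Set (EuclideanSpace ℝ (Fin N)) :=
    fun k => cellMap N ε k (unitCell N) with hCdef
  set A : (Fin N → ℤ) → Set (EuclideanSpace ℝ (Fin N)) :=
    fun k => cellMap N ε k (unitCell N \ Ys) with hAdef
  set U : Set (EuclideanSpace ℝ (Fin N)) := ⋃ k ∈ K, C k with hUdef
  -- measurability
  have hCm : ∀ k, MeasurableSet (C k) := fun k =>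
    (isOpen_cellMap ε hε' k isOpen_unitCell).measurableSet
  have hAkCk : ∀ k, A k = C k \ cellMap N ε k Ys := fun k => cellMap_diff ε hε' k _ _
  have hAm : ∀ k, MeasurableSet (A k) := fun k => by
    rw [hAkCk k]
    exact (hCm k).diff (isClosed_cellMap ε hε' k hYsc).measurableSet
  have hACsub : ∀ k, A k ⊆ C k := fun k => cellMap_mono ε k Set.diff_subset
  -- volumes
  have hθfin : volume (unitCell N \ Ys) ≤ 1 := by
    rw [← volume_unitCell (N := N)]; exact measure_mono Set.diff_subset
  have hvolC : ∀ k, volume (C k) = ENNReal.ofReal (ε ^ N) := fun k => by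
    simp only [hCdef]
    rw [volume_cellMap, volume_unitCell, abs_of_pos hε, mul_one]
  have hvolCt : ∀ k, (volume (C k)).toReal = ε ^ N := fun k => by
    rw [hvolC k, ENNReal.toReal_ofReal (pow_nonneg hε.le _)]
  have hvolAt : ∀ k, (volume (A k)).toReal = θ * ε ^ N := fun k => by
    simp only [hAdef]
    rw [volume_cellMap, abs_of_pos hε, ENNReal.toReal_mul,
      ENNReal.toReal_ofReal (pow_nonneg hε.le _), hθdef, mul_comm]
  have hθ0 : 0 ≤ θ := ENNReal.toReal_nonneg
  have hθ1 : θ ≤ 1 := by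
    rw [hθdef]
    calc (volume (unitCell N \ Ys)).toReal ≤ (1 : ENNReal).toReal :=
          ENNReal.toReal_mono ENNReal.one_ne_top hθfin
      _ = 1 := by simp
  -- distance bound on cells
  set d : ℝ := (L : ℝ) * (Real.sqrt N * ε) with hddef
  have hd0 : 0 ≤ d := mul_nonneg L.coe_nonneg
    (mul_nonneg (Real.sqrt_nonneg _) hε.le)
  have hcell_d : ∀ k, ∀ x ∈ C k, ∀ y ∈ C k, |ψ x - ψ y| ≤ d := by
    intro k x hx y hy
    have hx' : x ∈ cellMap N ε k (closure (unitCell N)) :=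
      cellMap_mono ε k subset_closure hx
    have hy' : y ∈ cellMap N ε k (closure (unitCell N)) :=
      cellMap_mono ε k subset_closure hy
    calc |ψ x - ψ y| = dist (ψ x) (ψ y) := (Real.dist_eq _ _).symm
      _ ≤ (L : ℝ) * dist x y := hψ.dist_le_mul x y
      _ ≤ (L : ℝ) * (Real.sqrt N * ε) :=
          mul_le_mul_of_nonneg_left (dist_le_in_cell ε hε.le k hx' hy') L.coe_nonneg
  -- per-cell estimate
  have hkest : ∀ k ∈ K, |(∫ x in A k, ψ x) - θ * ∫ x in C k, ψ x| ≤ θ * ε ^ N * d := by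
    intro k _
    have h := cell_integral_est hint (hACsub k)
      (by rw [hvolC k]; exact ENNReal.ofReal_ne_top)
      (by rw [hvolCt k]; exact pow_pos hε N)
      (θ := θ) (by rw [hvolAt k, hvolCt k])
      (d := d) (hcell_d k)
    rwa [hvolCt k] at h
  -- union structure
  have hsubU : ∀ k ∈ K, C k ⊆ Ω := fun k hk => (hKmem k).1 hk
  have hUΩ : U ⊆ Ω := Set.iUnion₂_subset hsubU
  have hCdisjp : (↑K : Set (Fin N → ℤ)).Pairwise (Function.onFun Disjoint C) :=
    fun k _ k' _ hne => cells_disjoint ε hε hne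
  have hUmeas : MeasurableSet U := K.measurableSet_biUnion fun k _ => hCm k
  have hvolU : (volume U).toReal = ∑ k ∈ K, ε ^ N := by
    rw [hUdef, measure_biUnion_finset hCdisjp (fun k _ => hCm k),
      ENNReal.toReal_sum (fun k _ => by rw [hvolC k]; exact ENNReal.ofReal_ne_top)]
    exact Finset.sum_congr rfl fun k _ => hvolCt k
  have hUle : (volume U).toReal ≤ (volume Ω).toReal :=
    ENNReal.toReal_mono hΩfin.ne (measure_mono hUΩ)
  set S : Set (EuclideanSpace ℝ (Fin N)) := ⋃ k ∈ K, cellMap N ε k Ys with hSdef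
  have hOeps : Oeps N Ω Ys ε = Ω \ S := by
    rw [Oeps, hSdef]
    congr 1
    ext x
    simp only [Set.mem_iUnion]
    constructor
    · rintro ⟨k, hk, h⟩; exact ⟨k, (hKmem k).2 hk, h⟩
    · rintro ⟨k, hk, h⟩; exact ⟨k, (hKmem k).1 hk, h⟩
  have hSsubU : S ⊆ U := Set.iUnion₂_mono fun k _ => cellMap_mono ε k hYsub
  have heq : Ω \ S = (Ω \ U) ∪ ⋃ k ∈ K, A k := by
    ext x
    constructor
    · rintro ⟨hxΩ, hxS⟩
      by_cases hxU : x ∈ U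
      · right
        obtain ⟨k, hk, hxC⟩ := Set.mem_iUnion₂.mp hxU
        refine Set.mem_iUnion₂.mpr ⟨k, hk, ?_⟩
        rw [hAkCk k]
        exact ⟨hxC, fun hxs => hxS (Set.mem_iUnion₂.mpr ⟨k, hk, hxs⟩)⟩
      · exact Or.inl ⟨hxΩ, hxU⟩
    · rintro (⟨hxΩ, hxU⟩ | hx)
      · exact ⟨hxΩ, fun hxS => hxU (hSsubU hxS)⟩
      · obtain ⟨k, hk, hxA⟩ := Set.mem_iUnion₂.mp hx
        rw [hAkCk k] at hxA
        refine ⟨hsubU k hk hxA.1, ?_⟩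
        intro hxS
        obtain ⟨k', hk', hxs⟩ := Set.mem_iUnion₂.mp hxS
        by_cases hkk : k' = k
        · subst hkk; exact hxA.2 hxs
        · exact Set.disjoint_left.mp (cells_disjoint ε hε hkk)
            (cellMap_mono ε k' hYsub hxs) hxA.1
  have hAsubU : (⋃ k ∈ K, A k) ⊆ U := Set.iUnion₂_mono fun k _ => hACsub k
  have hdisj2 : Disjoint (Ω \ U) (⋃ k ∈ K, A k) := by
    rw [Set.disjoint_left]
    rintro x ⟨_, hxU⟩ hxA
    exact hxU (hAsubU hxA)
  -- integral decompositions
  have hADisjp : (↑K : Set (Fin N → ℤ)).Pairwise (Function.onFun Disjoint A) :=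
    fun k hk k' hk' hne => ((cells_disjoint ε hε hne).mono (hACsub k) (hACsub k'))
  have hIA : (∫ x in ⋃ k ∈ K, A k, ψ x) = ∑ k ∈ K, ∫ x in A k, ψ x :=
    integral_biUnion_finset K (fun k _ => hAm k) hADisjp (fun k _ => hint.integrableOn)
  have hIC : (∫ x in U, ψ x) = ∑ k ∈ K, ∫ x in C k, ψ x :=
    integral_biUnion_finset K (fun k _ => hCm k) hCdisjp (fun k _ => hint.integrableOn)
  have hI1 : (∫ x in Ω \ S, ψ x) = (∫ x in Ω \ U, ψ x) + ∑ k ∈ K, ∫ x in A k, ψ x := by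
    rw [heq, setIntegral_union hdisj2 (K.measurableSet_biUnion fun k _ => hAm k)
      hint.integrableOn hint.integrableOn, hIA]
  have hI3 : (∫ x in Ω, ψ x) = (∫ x in Ω \ U, ψ x) + ∫ x in U, ψ x := by
    rw [← setIntegral_union disjoint_sdiff_left hUmeas hint.integrableOn hint.integrableOn,
      Set.diff_union_of_subset hUΩ]
  have hexpr : (∫ y in Oeps N Ω Ys ε, ψ y) - θ * ∫ y in Ω, ψ y
      = (∑ k ∈ K, ((∫ x in A k, ψ x) - θ * ∫ x in C k, ψ x))
        + (1 - θ) * ∫ x in Ω \ U, ψ x := by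
    rw [hOeps, hI1, hI3, hIC, Finset.sum_sub_distrib, ← Finset.mul_sum]
    ring
  -- sup bound
  set Msup : ℝ := ⨆ y ∈ Ω, |ψ y| with hMdef
  obtain ⟨B, hB⟩ := hψsupp.exists_bound_of_continuous hcont
  have hbdd : BddAbove (Set.range fun y => ⨆ _ : y ∈ Ω, |ψ y|) := by
    refine ⟨max B 0, ?_⟩
    rintro v ⟨y, rfl⟩
    dsimp only
    by_cases hy : y ∈ Ω
    · rw [ciSup_pos (f := fun _ : y ∈ Ω => |ψ y|) hy]
      exact le_max_of_le_left ((Real.norm_eq_abs (ψ y)) ▸ hB y)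
    · haveI : IsEmpty (y ∈ Ω) := isEmpty_Prop.mpr hy
      rw [Real.iSup_of_isEmpty]
      exact le_max_right _ _
  have hψle : ∀ y ∈ Ω, |ψ y| ≤ Msup := by
    intro y hy
    rw [hMdef]
    have h1 : (⨆ _ : y ∈ Ω, |ψ y|) = |ψ y| := ciSup_pos (f := fun _ : y ∈ Ω => |ψ y|) hy
    calc |ψ y| = ⨆ _ : y ∈ Ω, |ψ y| := h1.symm
      _ ≤ ⨆ y ∈ Ω, |ψ y| := le_ciSup hbdd y
  obtain ⟨y₀, hy₀⟩ := hΩconn.nonempty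
  have hM0 : 0 ≤ Msup := le_trans (abs_nonneg (ψ y₀)) (hψle y₀ hy₀)
  -- remainder bound
  have hvolrem_fin : volume (Ω \ U) < ⊤ := (measure_mono Set.diff_subset).trans_lt hΩfin
  have hremint : |∫ x in Ω \ U, ψ x| ≤ Msup * (volume (Ω \ U)).toReal := by
    have := norm_setIntegral_le_of_norm_le_const (μ := volume) (s := Ω \ U) (C := Msup)
      hvolrem_fin (f := ψ)
      (fun x hx => by rw [Real.norm_eq_abs]; exact hψle x hx.1)
    rwa [Real.norm_eq_abs] at this
  -- Ω \ U vs Ω \ OK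
  have hvolrem : (volume (Ω \ U)).toReal ≤ (volume (Ω \ OK N Ω ε)).toReal := by
    set Z : Set (EuclideanSpace ℝ (Fin N)) :=
      ⋃ k ∈ K, (cellMap N ε k (closure (unitCell N)) \ C k) with hZdef
    have hZk : ∀ k, volume (cellMap N ε k (closure (unitCell N)) \ C k) = 0 := by
      intro k
      have hsub : C k ⊆ cellMap N ε k (closure (unitCell N)) :=
        cellMap_mono ε k subset_closure
      have hcc : volume (cellMap N ε k (closure (unitCell N))) = ENNReal.ofReal (ε ^ N) := by
        rw [volume_cellMap, volume_closure_unitCell, abs_of_pos hε, mul_one]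
      rw [measure_diff hsub (hCm k).nullMeasurableSet
        (by rw [hvolC k]; exact ENNReal.ofReal_ne_top), hcc, hvolC k, tsub_self]
    have hZ0 : volume Z = 0 := by
      refine le_antisymm ?_ zero_le
      calc volume Z ≤ ∑ k ∈ K, volume (cellMap N ε k (closure (unitCell N)) \ C k) :=
            measure_biUnion_finset_le K _
        _ = 0 := by simp [hZk]
    have hincl : Ω \ U ⊆ (Ω \ OK N Ω ε) ∪ Z := by
      rintro x ⟨hxΩ, hxU⟩
      by_cases hOK : x ∈ OK N Ω ε
      · right
        have hx1 : x ∈ ⋃ k ∈ Keps N Ω ε, cellMap N ε k (closure (unitCell N)) :=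
          interior_subset hOK
        obtain ⟨k, hk, hxc⟩ := Set.mem_iUnion₂.mp hx1
        refine Set.mem_iUnion₂.mpr ⟨k, (hKmem k).2 hk, hxc, ?_⟩
        intro hxC
        exact hxU (Set.mem_iUnion₂.mpr ⟨k, (hKmem k).2 hk, hxC⟩)
      · exact Or.inl ⟨hxΩ, hOK⟩
    have h1 : volume (Ω \ U) ≤ volume (Ω \ OK N Ω ε) := by
      calc volume (Ω \ U) ≤ volume ((Ω \ OK N Ω ε) ∪ Z) := measure_mono hincl
        _ ≤ volume (Ω \ OK N Ω ε) + volume Z := measure_union_le _ _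
        _ = volume (Ω \ OK N Ω ε) := by rw [hZ0, add_zero]
    exact ENNReal.toReal_mono ((measure_mono Set.diff_subset).trans_lt hΩfin).ne h1
  -- assemble
  have hVΩ0 : (0:ℝ) ≤ (volume Ω).toReal := ENNReal.toReal_nonneg
  have h1θ : (0:ℝ) ≤ 1 - θ := by linarith
  calc |(∫ y in Oeps N Ω Ys ε, ψ y) - θ * ∫ y in Ω, ψ y|
      = |(∑ k ∈ K, ((∫ x in A k, ψ x) - θ * ∫ x in C k, ψ x))
          + (1 - θ) * ∫ x in Ω \ U, ψ x| := by rw [hexpr]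
    _ ≤ |∑ k ∈ K, ((∫ x in A k, ψ x) - θ * ∫ x in C k, ψ x)|
          + |(1 - θ) * ∫ x in Ω \ U, ψ x| := abs_add_le _ _
    _ ≤ (∑ k ∈ K, |(∫ x in A k, ψ x) - θ * ∫ x in C k, ψ x|)
          + (1 - θ) * |∫ x in Ω \ U, ψ x| := by
        refine add_le_add (Finset.abs_sum_le_sum_abs _ _) (le_of_eq ?_)
        rw [abs_mul, abs_of_nonneg h1θ]
    _ ≤ (∑ _k ∈ K, θ * ε ^ N * d) + (1 - θ) * (Msup * (volume (Ω \ U)).toReal) :=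
        add_le_add (Finset.sum_le_sum hkest) (mul_le_mul_of_nonneg_left hremint h1θ)
    _ = θ * (volume U).toReal * d + (1 - θ) * (volume (Ω \ U)).toReal * Msup := by
        rw [Finset.sum_const, hvolU, Finset.sum_const, nsmul_eq_mul, nsmul_eq_mul]
        ring
    _ ≤ 2 * (volume Ω).toReal * θ * L * Real.sqrt N * ε
          + (1 - θ) * (volume (Ω \ OK N Ω ε)).toReal * Msup := by
        refine add_le_add ?_ (mul_le_mul_of_nonneg_right
          (mul_le_mul_of_nonneg_left hvolrem h1θ) hM0)
        have t1 : θ * (volume U).toReal * d ≤ θ * (volume Ω).toReal * d :=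
          mul_le_mul_of_nonneg_right (mul_le_mul_of_nonneg_left hUle hθ0) hd0
        have heq2 : θ * (volume Ω).toReal * d
            = (volume Ω).toReal * θ * (L:ℝ) * Real.sqrt N * ε := by rw [hddef]; ring
        have hx : (0:ℝ) ≤ (volume Ω).toReal * θ * (L:ℝ) * Real.sqrt N * ε := by positivity
        calc θ * (volume U).toReal * d ≤ θ * (volume Ω).toReal * d := t1
          _ = (volume Ω).toReal * θ * (L:ℝ) * Real.sqrt N * ε := heq2
          _ ≤ 2 * (volume Ω).toReal * θ * (L:ℝ) * Real.sqrt N * ε := by linarith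

end
end
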